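/- arXiv:1111.4301 — 3 statements merged into one kernel-verified Lean document; each statement's English description precedes it below -/
import Mathlib

section
/- Let F be a field, M an n × r matrix over F with rows M_i, S ⊆ {1,...,n}, and y ∈ F^n with y_i = 0 for i ∉ S, sum_{i∈S} y_i (M_i ⊗ M_i) = 0, sum_{i∈S} y_i M_i = 0, and sum_{i∈S} y_i = 1. Let c = Mx + m·1 + f and c' = Mx' + m'·1 + f' with f_i = f'_i = 0 for all i ∈ S. Then yᵀ(c ⊙ c') = m·m', where ⊙ denotes pointwise (coordinate-wise) multiplication of vectors. -/
/-- Proto-homomorphic multiplication: under the constraints (including the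
tensor constraints) on `y`, the pointwise product of encryptions of `m` and `m'`
decrypts to `m * m'`. -/
theorem stmt_4 (F : Type*) [Field F] (n r : ℕ) (M : Matrix (Fin n) (Fin r) F)
    (S : Finset (Fin n)) (y : Fin n → F)
    (hy0 : ∀ i ∉ S, y i = 0)
    (hyMM : ∀ j k : Fin r, ∑ i ∈ S, y i * (M i j * M i k) = 0)
    (hyM : ∀ j : Fin r, ∑ i ∈ S, y i * M i j = 0)
    (hy1 : ∑ i ∈ S, y i = 1)
    (x x' : Fin r → F) (m m' : F) (f f' : Fin n → F)
    (hf : ∀ i ∈ S, f i = 0) (hf' : ∀ i ∈ S, f' i = 0)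
    (c c' : Fin n → F)
    (hc : ∀ i, c i = M.mulVec x i + m + f i)
    (hc' : ∀ i, c' i = M.mulVec x' i + m' + f' i) :
    ∑ i, y i * (c i * c' i) = m * m' := by
  have hS : ∑ i, y i * (c i * c' i) = ∑ i ∈ S, y i * (c i * c' i) := by
    rw [← Finset.sum_subset (Finset.subset_univ S)]
    intro i _ hi; rw [hy0 i hi]; ring
  rw [hS]
  have hterm : ∀ i ∈ S, y i * (c i * c' i) =
      y i * (M.mulVec x i * M.mulVec x' i)
      + (m' * (y i * M.mulVec x i) + m * (y i * M.mulVec x' i))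
      + y i * (m * m') := by
    intro i hi
    rw [hc, hc', hf i hi, hf' i hi]; ring
  rw [Finset.sum_congr rfl hterm, Finset.sum_add_distrib, Finset.sum_add_distrib, Finset.sum_add_distrib]
  have h1 : ∑ i ∈ S, y i * (M.mulVec x i * M.mulVec x' i) = 0 := by
    have : ∀ i ∈ S, y i * (M.mulVec x i * M.mulVec x' i)
        = ∑ j, ∑ k, x j * x' k * (y i * (M i j * M i k)) := by
      intro i _
      simp only [Matrix.mulVec, dotProduct, Finset.mul_sum, Finset.sum_mul]
      rw [Finset.sum_comm]
      exact Finset.sum_congr rfl fun j _ => Finset.sum_congr rfl fun k _ => by ring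
    rw [Finset.sum_congr rfl this, Finset.sum_comm]
    refine Finset.sum_eq_zero fun j _ => ?_
    rw [Finset.sum_comm]
    refine Finset.sum_eq_zero fun k _ => ?_
    rw [← Finset.mul_sum, hyMM j k, mul_zero]
  have hMx : ∀ v : Fin r → F, ∑ i ∈ S, y i * M.mulVec v i = 0 := by
    intro v
    have : ∀ i ∈ S, y i * M.mulVec v i = ∑ j, v j * (y i * M i j) := by
      intro i _
      simp only [Matrix.mulVec, dotProduct, Finset.mul_sum]
      exact Finset.sum_congr rfl fun j _ => by ring
    rw [Finset.sum_congr rfl this, Finset.sum_comm]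
    refine Finset.sum_eq_zero fun j _ => ?_
    rw [← Finset.mul_sum, hyM j, mul_zero]
  rw [h1, ← Finset.mul_sum, ← Finset.mul_sum, hMx x, hMx x', ← Finset.sum_mul, hy1]
  ring
end

section
/- Let F be a field, S ⊆ {1,...,n}, y ∈ F^n with y_i = 0 for i ∉ S and yᵀc = m for a ciphertext c ∈ F^n. Suppose z_1,...,z_n ∈ F^{n'} are such that for each i, the restriction of z_i to a set S' ⊆ {1,...,n'} equals M'_{S'} x_i + y_i·1 for some x_i ∈ F^{r'} (where M'_{S'} is the submatrix of an n' × r' matrix M' with rows in S'). Then the restriction of sum_{i=1}^n c_i z_i to S' equals M'_{S'} x + m·1, where x = sum_i c_i x_i. -/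
/-- Correctness of reencryption: if each `z i` agrees on `S'` with
`M'_{S'} (x i) + y i · 𝟙`, and `yᵀ c = m`, then `∑ i, c i • z i` agrees on `S'`
with `M'_{S'} x + m · 𝟙` where `x = ∑ i, c i • x i`. -/
theorem stmt_7 (F : Type*) [Field F] (n n' r' : ℕ)
    (S : Finset (Fin n)) (y : Fin n → F) (hy0 : ∀ i ∉ S, y i = 0)
    (c : Fin n → F) (m : F) (hdec : ∑ i, y i * c i = m)
    (M' : Matrix (Fin n') (Fin r') F) (S' : Finset (Fin n'))
    (z : Fin n → Fin n' → F) (x : Fin n → Fin r' → F)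
    (hz : ∀ i, ∀ j ∈ S', z i j = M'.mulVec (x i) j + y i) :
    ∀ j ∈ S',
      (∑ i, c i • z i) j = M'.mulVec (∑ i, c i • x i) j + m := by
  intro j hj
  have hlin : M'.mulVec (∑ i, c i • x i) j = ∑ i, c i * M'.mulVec (x i) j := by
    simp only [Matrix.mulVec, dotProduct, Finset.sum_apply, Pi.smul_apply,
      smul_eq_mul, Finset.mul_sum]
    rw [Finset.sum_comm]
    congr 1; ext i; congr 1; ext k; ring
  rw [hlin, ← hdec]
  simp only [Finset.sum_apply, Pi.smul_apply, smul_eq_mul]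
  rw [← Finset.sum_add_distrib]
  congr 1; ext i
  rw [hz i j hj]; ring
end

section
/- Fix m and let d = 2⌈log₂ m⌉ + 4 be even. Let CORR_d : F^{2^d} → F be the depth-d binary tree of gates G(x,y)=1−xy. There exists a function w : {1,...,2^d} → {1,...,m} (a wiring of inputs) such that for every x ∈ {0,1}^m ⊆ F^m in which at least 7m/8 of the coordinates equal b (for b ∈ {0,1}), the circuit CORR_d applied to (x_{w(1)},...,x_{w(2^d)}) outputs b. -/
/-!
Wire every leaf to a uniformly random coordinate. For a fixed Boolean input the two subtrees of
the root then see independent wirings, so the probability `q_d` that the depth-`d` tree outputs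
`true` satisfies `q_{d+1} = 1 - q_d²`. Two levels of this recursion turn an error probability `ε`
into at most `4ε²`; starting from `ε ≤ 1/8` at the leaves, the error after `2k` levels is at most
`2^(-2^k) / 4`. Once `2^k ≥ m` this is less than `2^(-(m+1))`, and a union bound over the `2^(m+1)`
pairs (input, majority bit) leaves a wiring that is correct on all of them.
-/

open Finset
open scoped Classical

/-- `CORR F d` is the full binary tree of depth `d` of gates `G(x,y) = 1 - x*y`,
applied to `2^d` inputs. -/
def CORR (F : Type*) [Field F] : (d : ℕ) → (Fin (2 ^ d) → F) → F
  | 0, x => x ⟨0, by norm_num⟩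
  | d + 1, x =>
      1 - CORR F d (fun i => x ⟨i, lt_of_lt_of_le i.isLt
              (Nat.pow_le_pow_right (by norm_num) (Nat.le_succ d))⟩)
          * CORR F d (fun i => x ⟨2 ^ d + i, by
              rw [pow_succ, Nat.mul_two]; exact Nat.add_lt_add_left i.isLt _⟩)

def leftLeaf (d : ℕ) : Fin (2 ^ d) → Fin (2 ^ (d + 1)) :=
  Fin.castLE (Nat.pow_le_pow_right two_pos d.le_succ)

def rightLeaf (d : ℕ) : Fin (2 ^ d) → Fin (2 ^ (d + 1)) :=
  Fin.cast (by rw [pow_succ, mul_two]) ∘ Fin.natAdd (2 ^ d)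

theorem CORR_succ (F : Type*) [Field F] (d : ℕ) (x : Fin (2 ^ (d + 1)) → F) :
    CORR F (d + 1) x = 1 - CORR F d (x ∘ leftLeaf d) * CORR F d (x ∘ rightLeaf d) := rfl

def nandTree : (d : ℕ) → (Fin (2 ^ d) → Bool) → Bool
  | 0, z => z ⟨0, by norm_num⟩
  | d + 1, z => !(nandTree d (z ∘ leftLeaf d) && nandTree d (z ∘ rightLeaf d))

def ofBool (R : Type*) [Zero R] [One R] (c : Bool) : R := if c then 1 else 0

theorem ofBool_injective (R : Type*) [Zero R] [One R] [NeZero (1 : R)] :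
    Function.Injective (ofBool R) := by
  intro c c'
  cases c <;> cases c' <;> simp [ofBool]

theorem exists_ofBool_eq {R : Type*} [Zero R] [One R] {a : R} (h : a = 0 ∨ a = 1) :
    ∃ c, ofBool R c = a := by
  rcases h with rfl | rfl
  exacts [⟨false, rfl⟩, ⟨true, rfl⟩]

theorem CORR_comp_ofBool (F : Type*) [Field F] :
    ∀ (d : ℕ) (z : Fin (2 ^ d) → Bool), CORR F d (ofBool F ∘ z) = ofBool F (nandTree d z)
  | 0, _ => rfl
  | d + 1, z => by
    rw [CORR_succ, nandTree, Function.comp_assoc, Function.comp_assoc, CORR_comp_ofBool F d,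
      CORR_comp_ofBool F d]
    cases nandTree d (z ∘ leftLeaf d) <;> cases nandTree d (z ∘ rightLeaf d) <;> simp [ofBool]

def splitLeaves (d : ℕ) (α : Type*) :
    (Fin (2 ^ (d + 1)) → α) ≃ (Fin (2 ^ d) → α) × (Fin (2 ^ d) → α) :=
  ((finSumFinEquiv.trans (finCongr (by rw [pow_succ, mul_two]))).arrowCongr
    (Equiv.refl α)).symm.trans (Equiv.sumArrowEquivProdArrow _ _ _)

theorem splitLeaves_apply (d : ℕ) {α : Type*} (w : Fin (2 ^ (d + 1)) → α) :
    splitLeaves d α w = (w ∘ leftLeaf d, w ∘ rightLeaf d) := rfl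

theorem card_filter_leftLeaf_and_rightLeaf {α : Type*} [Fintype α] (d : ℕ)
    (P Q : (Fin (2 ^ d) → α) → Prop) [DecidablePred P] [DecidablePred Q] :
    #{w : Fin (2 ^ (d + 1)) → α | P (w ∘ leftLeaf d) ∧ Q (w ∘ rightLeaf d)} =
      #{v | P v} * #{v | Q v} := by
  rw [← card_product, ← filter_product]
  exact card_equiv (splitLeaves d α) (by simp [splitLeaves_apply])

theorem exists_forall_of_sum_card_filter_not_lt {ι β : Type*} [Fintype β] (s : Finset ι)
    (P : ι → β → Prop) [∀ i, DecidablePred (P i)] (h : ∑ i ∈ s, #{b | ¬ P i b} < Fintype.card β) :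
    ∃ b, ∀ i ∈ s, P i b := by
  by_contra! H
  refine h.not_ge (le_trans ?_ card_biUnion_le)
  rw [← card_univ]
  refine card_le_card fun b _ => ?_
  obtain ⟨i, hi, hb⟩ := H b
  exact mem_biUnion.2 ⟨i, hi, by simpa using hb⟩

theorem mul_le_pow_two_pow_of_le_mul_sq {u : ℕ → ℝ} {c : ℝ} (hc : 0 ≤ c) (hu : ∀ k, 0 ≤ u k)
    (h : ∀ k, u (k + 1) ≤ c * u k ^ 2) (k : ℕ) : c * u k ≤ (c * u 0) ^ 2 ^ k := by
  induction k with
  | zero => simp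
  | succ k ih =>
    calc c * u (k + 1) ≤ (c * u k) ^ 2 := by nlinarith [h k]
      _ ≤ ((c * u 0) ^ 2 ^ k) ^ 2 := pow_le_pow_left₀ (mul_nonneg hc (hu k)) ih 2
      _ = (c * u 0) ^ 2 ^ (k + 1) := by rw [← pow_mul, pow_succ]

section ErrorProbability

variable {α : Type*} [Fintype α] (y : α → Bool)

noncomputable def errProb (b : Bool) (d : ℕ) : ℝ :=
  #{w : Fin (2 ^ d) → α | nandTree d (y ∘ w) ≠ b} / Fintype.card (Fin (2 ^ d) → α)

theorem errProb_nonneg (b : Bool) (d : ℕ) : 0 ≤ errProb y b d := by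
  unfold errProb; positivity

theorem errProb_zero (b : Bool) : errProb y b 0 = #{i | y i ≠ b} / Fintype.card α := by
  let e : (Fin (2 ^ 0) → α) ≃ α := Equiv.funUnique (Fin 1) α
  rw [errProb, Fintype.card_congr e, card_equiv e (t := {i | y i ≠ b}) fun w => by
    rw [mem_filter, mem_filter]; simp [e, nandTree]]

theorem errProb_true_succ (d : ℕ) :
    errProb y true (d + 1) = errProb y false d ^ 2 := by
  have hsplit : #{w : Fin (2 ^ (d + 1)) → α | nandTree (d + 1) (y ∘ w) ≠ true} =
      #{v : Fin (2 ^ d) → α | nandTree d (y ∘ v) ≠ false} ^ 2 := by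
    rw [sq, ← card_filter_leftLeaf_and_rightLeaf]
    simp [nandTree, Function.comp_assoc]
  rw [errProb, errProb, hsplit, Fintype.card_congr (splitLeaves d α), Fintype.card_prod]
  push_cast
  ring

variable [Nonempty α]

theorem errProb_false_add_true (d : ℕ) : errProb y false d + errProb y true d = 1 := by
  have hpos : (0 : ℝ) < Fintype.card (Fin (2 ^ d) → α) := mod_cast Fintype.card_pos
  have hsum := card_filter_add_card_filter_not (s := univ)
    (fun w : Fin (2 ^ d) → α => nandTree d (y ∘ w) ≠ false)
  rw [errProb, errProb, ← add_div, div_eq_one_iff_eq hpos.ne']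
  simp only [card_univ, ne_eq, Bool.not_eq_false, Bool.not_eq_true] at hsum ⊢
  exact_mod_cast hsum

theorem errProb_add_two_le (b : Bool) (d : ℕ) :
    errProb y b (d + 2) ≤ 4 * errProb y b d ^ 2 := by
  have htrue (e : ℕ) : errProb y true e = 1 - errProb y false e := by
    linarith [errProb_false_add_true y e]
  have hfalse (e : ℕ) : errProb y false (e + 1) = 1 - errProb y false e ^ 2 := by
    rw [← errProb_true_succ, htrue]; ring
  have hq0 := errProb_nonneg y false d
  have hq1 : errProb y false d ≤ 1 := by linarith [errProb_nonneg y true d, htrue d]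
  -- with `q = errProb y false d`: `1 - (1 - q²)² = q²(2 - q²)` and `(1 - q²)² = (1 - q)²(1 + q)²`
  cases b
  · rw [hfalse, hfalse]
    nlinarith [mul_nonneg (sq_nonneg (errProb y false d)) (sq_nonneg (errProb y false d))]
  · rw [htrue, htrue, hfalse, hfalse]
    nlinarith [mul_le_mul_of_nonneg_left (show (1 + errProb y false d) ^ 2 ≤ 4 by nlinarith)
      (sq_nonneg (1 - errProb y false d))]

theorem errProb_le_of_minority {b : Bool}
    (hb : 8 * #{i | y i ≠ b} ≤ Fintype.card α) (k : ℕ) :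
    errProb y b (2 * k) ≤ (1 / 2) ^ 2 ^ k / 4 := by
  have hbase : 4 * errProb y b 0 ≤ 1 / 2 := by
    have hpos : (0 : ℝ) < Fintype.card α := mod_cast Fintype.card_pos
    rw [errProb_zero, mul_div_assoc', div_le_iff₀ hpos]
    have : (8 * #{i | y i ≠ b} : ℝ) ≤ Fintype.card α := mod_cast hb
    linarith
  have hiter := mul_le_pow_two_pow_of_le_mul_sq (u := fun j => errProb y b (2 * j)) zero_le_four
    (fun _ => errProb_nonneg y b _) (fun j => errProb_add_two_le y b (2 * j)) k
  have hpow := pow_le_pow_left₀ (by linarith [errProb_nonneg y b 0]) hbase (2 ^ k)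
  linarith

end ErrorProbability

theorem exists_wiring_forall_nandTree_eq {α : Type*} [Fintype α] [Nonempty α]
    {k : ℕ} (hk : Fintype.card α ≤ 2 ^ k) :
    ∃ w : Fin (2 ^ (2 * k)) → α, ∀ (y : α → Bool) (b : Bool),
      8 * #{i | y i ≠ b} ≤ Fintype.card α → nandTree (2 * k) (y ∘ w) = b := by
  let s : Finset ((α → Bool) × Bool) := {p | 8 * #{i | p.1 i ≠ p.2} ≤ Fintype.card α}
  let N := Fintype.card (Fin (2 ^ (2 * k)) → α)
  have hN : (0 : ℝ) < N := mod_cast Fintype.card_pos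
  have hbad (p) (hp : p ∈ s) :
      (#{w : Fin (2 ^ (2 * k)) → α | nandTree (2 * k) (p.1 ∘ w) ≠ p.2} : ℝ) ≤
        (1 / 2) ^ 2 ^ k / 4 * N := by
    rw [← div_le_iff₀ hN]
    exact errProb_le_of_minority p.1 (mem_filter.1 hp).2 k
  have hs : (#s : ℝ) ≤ 2 ^ (Fintype.card α + 1) := by
    have := card_le_univ s
    simp only [Fintype.card_prod, Fintype.card_fun, Fintype.card_bool] at this
    exact_mod_cast this.trans_eq (pow_succ 2 _).symm
  have hsmall : (2 : ℝ) ^ (Fintype.card α + 1) * ((1 / 2) ^ 2 ^ k / 4) < 1 :=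
    calc (2 : ℝ) ^ (Fintype.card α + 1) * ((1 / 2) ^ 2 ^ k / 4)
        ≤ 2 ^ (2 ^ k + 1) * ((1 / 2) ^ 2 ^ k / 4) := by gcongr; norm_num
      _ = (2 * (1 / 2)) ^ 2 ^ k / 2 := by rw [mul_pow, pow_succ]; ring
      _ < 1 := by norm_num
  have hsum : ∑ p ∈ s, #{w : Fin (2 ^ (2 * k)) → α | nandTree (2 * k) (p.1 ∘ w) ≠ p.2} < N := by
    suffices h : (∑ p ∈ s, #{w : Fin (2 ^ (2 * k)) → α | nandTree (2 * k) (p.1 ∘ w) ≠ p.2} : ℝ)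
        < N from mod_cast h
    calc _ ≤ ∑ _p ∈ s, (1 / 2) ^ 2 ^ k / 4 * (N : ℝ) := sum_le_sum hbad
      _ = #s * ((1 / 2) ^ 2 ^ k / 4) * N := by rw [sum_const, nsmul_eq_mul, mul_assoc]
      _ < N := by
        refine mul_lt_of_lt_one_left hN (lt_of_le_of_lt ?_ hsmall)
        gcongr
  obtain ⟨w, hw⟩ := exists_forall_of_sum_card_filter_not_lt s
    (fun p w => nandTree (2 * k) (p.1 ∘ w) = p.2) hsum
  exact ⟨w, fun y b hb => hw (y, b) (mem_filter.2 ⟨mem_univ _, hb⟩)⟩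

/-- Valiant's trick: with `d = 2⌈log₂ m⌉ + 4`, there is a wiring `w` of the
`2^d` leaves of `CORR_d` to `m` inputs such that for every Boolean input
vector in which at least `7m/8` coordinates equal `b ∈ {0,1}`, the circuit
outputs `b`. -/
theorem stmt_15 (F : Type*) [Field F] (m : ℕ) (hm : 0 < m)
    (d : ℕ) (hd : d = 2 * Nat.clog 2 m + 4) :
    ∃ w : Fin (2 ^ d) → Fin m,
      ∀ (x : Fin m → F), (∀ i, x i = 0 ∨ x i = 1) →
        ∀ b : F, (b = 0 ∨ b = 1) →
          (7 * (m : ℝ) / 8 ≤ (univ.filter fun i => x i = b).card) →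
          CORR F d (fun k => x (w k)) = b := by
  have : NeZero m := ⟨hm.ne'⟩
  have hk : Fintype.card (Fin m) ≤ 2 ^ (Nat.clog 2 m + 2) := by
    rw [Fintype.card_fin, pow_add]
    linarith [Nat.le_pow_clog one_lt_two m]
  obtain ⟨w, hw⟩ := exists_wiring_forall_nandTree_eq hk
  obtain rfl : d = 2 * (Nat.clog 2 m + 2) := by omega
  refine ⟨w, fun x hx b hb hmaj => ?_⟩
  choose y hy using fun i => exists_ofBool_eq (hx i)
  obtain rfl : ofBool F ∘ y = x := funext hy
  obtain ⟨c, rfl⟩ := exists_ofBool_eq hb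
  have hminority : 8 * #{i | y i ≠ c} ≤ m := by
    have hsplit := card_filter_add_card_filter_not (s := univ) (fun i => y i = c)
    simp only [Function.comp_apply, (ofBool_injective F).eq_iff] at hmaj
    rw [card_univ, Fintype.card_fin] at hsplit
    have : (m : ℝ) = #{i | y i = c} + #{i | y i ≠ c} := mod_cast hsplit.symm
    have : (8 * #{i | y i ≠ c} : ℝ) ≤ m := by linarith
    exact_mod_cast this
  exact (CORR_comp_ofBool F _ (y ∘ w)).trans (congrArg _ (hw y c (by simpa using hminority)))
end
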